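/- Let X be a Banach space and let η be a measure of non-compactness on X*, with constant b > 0 in property (iii). Then the ω-iterated measure η^ω is also a measure of non-compactness on X*, and it satisfies property (iii) with the same constant b. -/

import Mathlib

open Filter Topology Set Pointwise

noncomputable section

namespace Szlenk

variable {E : Type*}

/-- The fragment derivation `[η]'_ε(A)` associated to a set function `η`:
the points of `A` all of whose neighborhoods `U` satisfy `η (A ∩ cl U) ≥ ε`. -/
def frag [TopologicalSpace E] (η : Set E → ℝ) (ε : ℝ) (A : Set E) : Set E :=
  {x | x ∈ A ∧ ∀ U ∈ 𝓝 x, ε ≤ η (A ∩ closure U)}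

/-- Transfinite iterates `[η]^γ_ε(A)` of the fragment derivation. -/
def fragIter [TopologicalSpace E] (η : Set E → ℝ) (ε : ℝ) (A : Set E) (γ : Ordinal.{0}) :
    Set E :=
  Ordinal.limitRecOn γ A (fun _ S => frag η ε S)
    (fun γ _ ih => ⋂ β : {β : Ordinal.{0} // β < γ}, ih β.1 β.2)

/-- The `ω`-iterated measure `η^ω (A) = inf {ε > 0 : [η]^ω_ε(A) = ∅}`. -/
def etaOmega [TopologicalSpace E] (η : Set E → ℝ) (A : Set E) : ℝ :=
  sInf {ε : ℝ | 0 < ε ∧ fragIter η ε A Ordinal.omega0 = ∅}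

/-- The iterates `η^{ω^n}` (with `η^{ω^0} := η` and `η^{ω^{n+1}} := (η^{ω^n})^ω`). -/
def omegaPow [TopologicalSpace E] (η : Set E → ℝ) : ℕ → Set E → ℝ
  | 0 => η
  | n + 1 => etaOmega (omegaPow η n)

/-- `η` is a measure of non compactness (with respect to the closed unit ball `ball`):
it is nonnegative, vanishes on singletons, is monotone, satisfies
`η (A ∪ B) = max (η A) (η B)`, and `η (A + l • ball) ≤ η A + l * b` for some `b > 0`.
All conditions are required on (weak*-)compact sets only. -/
structure IsMNCOn [TopologicalSpace E] [AddCommGroup E] [Module ℝ E]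
    (ball : Set E) (η : Set E → ℝ) : Prop where
  nonneg : ∀ A : Set E, IsCompact A → 0 ≤ η A
  singleton : ∀ x : E, η {x} = 0
  mono : ∀ A B : Set E, IsCompact A → IsCompact B → A ⊆ B → η A ≤ η B
  union : ∀ A B : Set E, IsCompact A → IsCompact B → η (A ∪ B) = max (η A) (η B)
  ball_add : ∃ b > 0, ∀ A : Set E, IsCompact A → ∀ l : ℝ, 0 < l →
    η (A + l • ball) ≤ η A + l * b

/-- `η` is a measure of non compactness with the explicit constant `b` in property (iii). -/
structure IsMNCWith [TopologicalSpace E] [AddCommGroup E] [Module ℝ E]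
    (ball : Set E) (b : ℝ) (η : Set E → ℝ) : Prop where
  b_pos : 0 < b
  nonneg : ∀ A : Set E, IsCompact A → 0 ≤ η A
  singleton : ∀ x : E, η {x} = 0
  mono : ∀ A B : Set E, IsCompact A → IsCompact B → A ⊆ B → η A ≤ η B
  union : ∀ A B : Set E, IsCompact A → IsCompact B → η (A ∪ B) = max (η A) (η B)
  ball_add : ∀ A : Set E, IsCompact A → ∀ l : ℝ, 0 < l →
    η (A + l • ball) ≤ η A + l * b

/-- A sublinear measure of non compactness: homogeneous and subadditive. -/
structure IsSublinear [TopologicalSpace E] [AddCommGroup E] [Module ℝ E]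
    (η : Set E → ℝ) : Prop where
  homog : ∀ (l : ℝ) (A : Set E), IsCompact A → η (l • A) = |l| * η A
  subadd : ∀ A B : Set E, IsCompact A → IsCompact B → η (A + B) ≤ η A + η B

variable {X : Type*} [NormedAddCommGroup X] [NormedSpace ℝ X]

/-- The dual norm on `X*` (the dual being equipped with its weak* topology). -/
def dnorm (f : WeakDual ℝ X) : ℝ := ‖WeakDual.toStrongDual f‖

/-- The closed unit ball of `X*`. -/
def dualBall (X : Type*) [NormedAddCommGroup X] [NormedSpace ℝ X] :
    Set (WeakDual ℝ X) := {f | dnorm f ≤ 1}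

/-- The slice derivation `⟨η⟩'_ε(A)`: the points of `A` such that every weak*-closed
halfspace containing them meets `A` in a set of `η`-measure at least `ε`. -/
def sliceD (η : Set (WeakDual ℝ X) → ℝ) (ε : ℝ) (A : Set (WeakDual ℝ X)) :
    Set (WeakDual ℝ X) :=
  {x | x ∈ A ∧ ∀ (f : X) (c : ℝ), c ≤ x f → ε ≤ η (A ∩ {y | c ≤ y f})}

/-- Transfinite iterates `⟨η⟩^γ_ε(A)` of the slice derivation. -/
def sliceIter (η : Set (WeakDual ℝ X) → ℝ) (ε : ℝ) (A : Set (WeakDual ℝ X))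
    (γ : Ordinal.{0}) : Set (WeakDual ℝ X) :=
  Ordinal.limitRecOn γ A (fun _ S => sliceD η ε S)
    (fun γ _ ih => ⋂ β : {β : Ordinal.{0} // β < γ}, ih β.1 β.2)

/-- A weak*-closed halfspace of `X*`. -/
def IsHalfspace (H : Set (WeakDual ℝ X)) : Prop :=
  ∃ (f : X) (c : ℝ), H = {y : WeakDual ℝ X | c ≤ y f}

/-- The Kuratowski measure of non compactness associated to a (dual) norm `Nd`:
the infimum of all `ε > 0` such that `A` can be covered by finitely many balls of
diameter `ε` (i.e. of radius `ε / 2`). -/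
def kurN (Nd : WeakDual ℝ X → ℝ) (A : Set (WeakDual ℝ X)) : ℝ :=
  sInf {ε : ℝ | 0 < ε ∧
    ∃ F : Finset (WeakDual ℝ X), A ⊆ ⋃ c ∈ F, {y | Nd (y - c) ≤ ε / 2}}

/-- The Kuratowski measure of non compactness on `X*`. -/
def kur (A : Set (WeakDual ℝ X)) : ℝ := kurN dnorm A

/-- The iterated sets `A^ε_β` of the convex Szlenk derivation:
`A^ε_{β+1}` is the weak*-closed convex hull of `[σ]'_ε(A^ε_β)`. -/
def convIter (ε : ℝ) (K : Set (WeakDual ℝ X)) (γ : Ordinal.{0}) : Set (WeakDual ℝ X) :=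
  Ordinal.limitRecOn γ K (fun _ S => closure (convexHull ℝ (frag kur ε S)))
    (fun γ _ ih => ⋂ β : {β : Ordinal.{0} // β < γ}, ih β.1 β.2)

/-- The families `𝒯_α` of trees on `ℕ`. A tree is a set of finite sequences of
naturals (closed under initial segments); the root is the empty sequence, and
`(n)⌢s` is represented by `n :: s`. `𝒯_0 = {{∅}}`, and `T ∈ 𝒯_α` for `α ≥ 1` if
`T = {∅} ∪ ⋃_k (n_k)⌢T_k` with `n_k` strictly increasing, `T_k ∈ 𝒯_{α_k}`, where
`α_k = β` for all `k` if `α = β + 1`, and `α_k ↗ α` if `α` is a limit ordinal. -/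
inductive IsTreeFam : Ordinal.{0} → Set (List ℕ) → Prop
  | zero : IsTreeFam 0 {[]}
  | node {α : Ordinal.{0}} (nk : ℕ → ℕ) (αk : ℕ → Ordinal.{0}) (Tk : ℕ → Set (List ℕ))
      (hnk : StrictMono nk) (hTk : ∀ k, IsTreeFam (αk k) (Tk k))
      (hα : (∃ β, α = β + 1 ∧ ∀ k, αk k = β) ∨
            (Order.IsSuccLimit α ∧ StrictMono αk ∧ α = ⨆ k, αk k)) :
      IsTreeFam α ({[]} ∪ ⋃ k, (List.cons (nk k)) '' Tk k)

/-- A family `(x_s)_{s ∈ T}` is weak*-continuous: `x_{s⌢n} → x_s` (in the ambient,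
i.e. weak*, topology) along the children of every node `s` of `T`. -/
def IsContFam [TopologicalSpace E] (T : Set (List ℕ)) (x : List ℕ → E) : Prop :=
  ∀ s ∈ T, Tendsto (fun n : ℕ => x (s ++ [n]))
    (atTop ⊓ 𝓟 {n : ℕ | s ++ [n] ∈ T}) (𝓝 (x s))

/-- A family `(x_s)_{s ∈ T}` in `X*` is `ε`-separated: `‖x_s - x_{s⌢n}‖ ≥ ε`. -/
def IsSepFam (ε : ℝ) (T : Set (List ℕ)) (x : List ℕ → WeakDual ℝ X) : Prop :=
  ∀ s ∈ T, ∀ n : ℕ, s ++ [n] ∈ T → ε ≤ dnorm (x s - x (s ++ [n]))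

/-- Norm distance from a point of `X*` to a subset of `X*`. -/
def ddist (f : WeakDual ℝ X) (A : Set (WeakDual ℝ X)) : ℝ :=
  sInf ((fun g => dnorm (f - g)) '' A)

/-- The product `η₁ × η₂` of two measures of non compactness. -/
def prodMNC {X₁ X₂ : Type*} [NormedAddCommGroup X₁] [NormedSpace ℝ X₁]
    [NormedAddCommGroup X₂] [NormedSpace ℝ X₂]
    (η₁ : Set (WeakDual ℝ X₁) → ℝ) (η₂ : Set (WeakDual ℝ X₂) → ℝ)
    (A : Set (WeakDual ℝ X₁ × WeakDual ℝ X₂)) : ℝ :=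
  sInf {ε : ℝ | 0 < ε ∧ ∃ (n : ℕ) (A₁ : Fin n → Set (WeakDual ℝ X₁))
      (A₂ : Fin n → Set (WeakDual ℝ X₂)),
      (∀ i, IsCompact (A₁ i) ∧ IsCompact (A₂ i) ∧ η₁ (A₁ i) < ε ∧ η₂ (A₂ i) < ε) ∧
      A ⊆ ⋃ i, A₁ i ×ˢ A₂ i}

/-- The dual norm on `X*` associated to an (equivalent) norm `N` on `X`. -/
def dualNormOf (N : X → ℝ) (f : WeakDual ℝ X) : ℝ :=
  sSup ((fun x => f x) '' {x : X | N x ≤ 1})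

/-- The closed unit ball of the dual norm associated to a norm `N` on `X`. -/
def dualBallOf (N : X → ℝ) : Set (WeakDual ℝ X) :=
  {f : WeakDual ℝ X | ∀ x : X, |f x| ≤ N x}

/-! The `ω`-th fragment derivative `[η]^ω_ε(A)` is the intersection of the decreasing compact
sets `(frag η ε)^[n] A`. Properties (i)–(iii) of `η` each give an inclusion for one derivation
step, e.g. `[η]'_ε(A ∪ B) ⊆ [η]'_ε(A) ∪ [η]'_ε(B)` and `[η]'_{ε + l b}(A + l B) ⊆ [η]'_ε(A) + l B`;
the latter because near a point `x ∉ [η]'_ε(A) + l B` the set `A + l B` is covered by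
`(A ∩ V) + l B` for a closed `V` with `η (A ∩ V) < ε`, found by compactness of `A ∩ (x - l B)`.
These inclusions pass to the iterates by induction and then to their intersections; for sums
this uses Cantor's intersection theorem: `⋂ₙ (Cₙ + K) ⊆ (⋂ₙ Cₙ) + K` for decreasing compact
`Cₙ` and compact `K`. -/

section AddCompact

variable [TopologicalSpace E] [AddCommGroup E] [IsTopologicalAddGroup E] [T2Space E]
  {x : E} {A B V : Set E}

theorem iInter_add_subset_of_antitone {C : ℕ → Set E} (hC : Antitone C)
    (hCc : ∀ n, IsCompact (C n)) (hB : IsCompact B) : ⋂ n, (C n + B) ⊆ (⋂ n, C n) + B := by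
  intro x hx
  have hxB : IsCompact ((x - ·) '' B) := hB.image (continuous_sub_left x)
  obtain ⟨c, hc⟩ := IsCompact.nonempty_iInter_of_sequence_nonempty_isCompact_isClosed
    (fun n => C n ∩ (x - ·) '' B) (fun n => inter_subset_inter_left _ (hC n.le_succ))
    (fun n => by
      obtain ⟨c, hc, v, hv, rfl⟩ := mem_iInter.1 hx n
      exact ⟨c, hc, v, hv, add_sub_cancel_right c v⟩)
    ((hCc 0).inter hxB) fun n => ((hCc n).inter hxB).isClosed
  obtain ⟨v, hv, rfl⟩ := (mem_iInter.1 hc 0).2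
  exact ⟨x - v, mem_iInter.2 fun n => (mem_iInter.1 hc n).1, v, hv, sub_add_cancel x v⟩

theorem exists_isClosed_mem_nhds_add_inter_subset [RegularSpace E] (hA : IsCompact A)
    (hB : IsCompact B) (hV : A ∩ (x - ·) '' B ⊆ interior V) :
    ∃ N ∈ 𝓝 x, IsClosed N ∧ (A + B) ∩ N ⊆ A ∩ V + B := by
  have hx : x ∉ A \ interior V + B := by
    rintro ⟨a, ⟨ha, haV⟩, v, hv, rfl⟩
    exact haV (hV ⟨ha, v, hv, add_sub_cancel_right a v⟩)
  obtain ⟨N, hN, hNc, hNx⟩ := exists_mem_nhds_isClosed_subset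
    (((hA.diff isOpen_interior).add hB).isClosed.isOpen_compl.mem_nhds hx)
  refine ⟨N, hN, hNc, ?_⟩
  rintro _ ⟨⟨a, ha, v, hv, rfl⟩, haN⟩
  by_cases haV : a ∈ interior V
  · exact ⟨a, ⟨ha, interior_subset haV⟩, v, hv, rfl⟩
  · exact absurd ⟨a, ⟨ha, haV⟩, v, hv, rfl⟩ (hNx haN)

end AddCompact

section Frag

variable [TopologicalSpace E] {η : Set E → ℝ} {ε ε' : ℝ} {A B : Set E}

theorem frag_subset : frag η ε A ⊆ A := fun _ hx => hx.1

theorem frag_anti_eps (h : ε ≤ ε') : frag η ε' A ⊆ frag η ε A :=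
  fun _ hx => ⟨hx.1, fun U hU => h.trans (hx.2 U hU)⟩

theorem frag_eq_empty_of_lt (h : η A < ε) : frag η ε A = ∅ :=
  eq_empty_of_forall_notMem fun _ hx => by
    simpa [h.not_ge] using hx.2 univ univ_mem

theorem antitone_iterate_frag : Antitone fun n : ℕ => (frag η ε)^[n] A :=
  antitone_nat_of_succ_le fun n => by
    rw [Function.iterate_succ_apply']
    exact frag_subset

theorem fragIter_natCast (n : ℕ) : fragIter η ε A n = (frag η ε)^[n] A := by
  induction n with
  | zero => exact Ordinal.limitRecOn_zero _ _ _
  | succ n ih =>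
    rw [Nat.cast_succ, Function.iterate_succ_apply', ← ih]
    exact Ordinal.limitRecOn_add_one _ _ _ _

theorem fragIter_omega0 : fragIter η ε A Ordinal.omega0 = ⋂ n : ℕ, (frag η ε)^[n] A := by
  unfold fragIter
  rw [Ordinal.limitRecOn_limit _ _ _ _ Ordinal.isSuccLimit_omega0]
  ext x
  simp only [mem_iInter, Subtype.forall, Ordinal.lt_omega0]
  constructor
  · intro h n
    rw [← fragIter_natCast]
    exact h n ⟨n, rfl⟩
  · rintro h _ ⟨n, rfl⟩
    change x ∈ fragIter η ε A n
    rw [fragIter_natCast]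
    exact h n

theorem fragIter_omega0_eq_empty_of_lt (h : η A < ε) :
    fragIter η ε A Ordinal.omega0 = ∅ :=
  subset_eq_empty ((fragIter_omega0).trans_subset (iInter_subset _ 1))
    (frag_eq_empty_of_lt h)

theorem isClosed_frag [T2Space E] (hmono : MonotoneOn η {K | IsCompact K})
    (hA : IsCompact A) : IsClosed (frag η ε A) := by
  refine isClosed_of_closure_subset fun x hx => ⟨hA.isClosed.closure_subset_iff.2 frag_subset hx,
    fun U hU => ?_⟩
  obtain ⟨y, hyU, hy⟩ := mem_closure_iff.1 hx (interior U) isOpen_interior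
    (mem_interior_iff_mem_nhds.2 hU)
  exact (hy.2 _ (isOpen_interior.mem_nhds hyU)).trans <|
    hmono (hA.inter_right isClosed_closure) (hA.inter_right isClosed_closure)
      (inter_subset_inter_right _ (closure_mono interior_subset))

theorem isCompact_frag [T2Space E] (hmono : MonotoneOn η {K | IsCompact K})
    (hA : IsCompact A) : IsCompact (frag η ε A) :=
  hA.of_isClosed_subset (isClosed_frag hmono hA) frag_subset

theorem frag_mono (hmono : MonotoneOn η {K | IsCompact K}) (hA : IsCompact A)
    (hB : IsCompact B) (hAB : A ⊆ B) : frag η ε A ⊆ frag η ε B :=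
  fun _ hx => ⟨hAB hx.1, fun U hU => (hx.2 U hU).trans <|
    hmono (hA.inter_right isClosed_closure) (hB.inter_right isClosed_closure)
      (inter_subset_inter_left _ hAB)⟩

variable [T2Space E]

theorem isCompact_iterate_frag (hmono : MonotoneOn η {K | IsCompact K}) (hA : IsCompact A)
    (n : ℕ) : IsCompact ((frag η ε)^[n] A) := by
  induction n with
  | zero => exact hA
  | succ n ih => exact Function.iterate_succ_apply' .. ▸ isCompact_frag hmono ih

theorem iterate_frag_mono (hmono : MonotoneOn η {K | IsCompact K}) (hA : IsCompact A)
    (hB : IsCompact B) (hAB : A ⊆ B) (n : ℕ) : (frag η ε)^[n] A ⊆ (frag η ε)^[n] B := by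
  induction n with
  | zero => exact hAB
  | succ n ih =>
    simp only [Function.iterate_succ_apply']
    exact frag_mono hmono (isCompact_iterate_frag hmono hA n) (isCompact_iterate_frag hmono hB n) ih

theorem iterate_frag_anti_eps (hmono : MonotoneOn η {K | IsCompact K}) (hA : IsCompact A)
    (h : ε ≤ ε') (n : ℕ) : (frag η ε')^[n] A ⊆ (frag η ε)^[n] A := by
  induction n with
  | zero => exact subset_rfl
  | succ n ih =>
    simp only [Function.iterate_succ_apply']
    exact (frag_mono hmono (isCompact_iterate_frag hmono hA n)
      (isCompact_iterate_frag hmono hA n) ih).trans (frag_anti_eps h)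

theorem fragIter_omega0_mono (hmono : MonotoneOn η {K | IsCompact K}) (hA : IsCompact A)
    (hB : IsCompact B) (hAB : A ⊆ B) :
    fragIter η ε A Ordinal.omega0 ⊆ fragIter η ε B Ordinal.omega0 := by
  simpa only [fragIter_omega0] using iInter_mono (iterate_frag_mono hmono hA hB hAB)

theorem fragIter_omega0_anti_eps (hmono : MonotoneOn η {K | IsCompact K}) (hA : IsCompact A)
    (h : ε ≤ ε') : fragIter η ε' A Ordinal.omega0 ⊆ fragIter η ε A Ordinal.omega0 := by
  simpa only [fragIter_omega0] using iInter_mono (iterate_frag_anti_eps hmono hA h)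

end Frag

section EtaOmega

variable [TopologicalSpace E] {η : Set E → ℝ} {ε c : ℝ} {A B : Set E}

theorem etaOmega_nonneg : 0 ≤ etaOmega η A :=
  Real.sInf_nonneg fun _ hε => hε.1.le

theorem etaOmega_le_of_forall_lt (hc : 0 ≤ c)
    (h : ∀ ε, c < ε → fragIter η ε A Ordinal.omega0 = ∅) : etaOmega η A ≤ c :=
  le_of_forall_gt_imp_ge_of_dense fun ε hε =>
    csInf_le ⟨0, fun _ hε' => hε'.1.le⟩ ⟨hc.trans_lt hε, h ε hε⟩

theorem etaOmega_le_self (h : 0 ≤ η A) : etaOmega η A ≤ η A :=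
  etaOmega_le_of_forall_lt h fun _ hε => fragIter_omega0_eq_empty_of_lt hε

theorem fragIter_omega0_eq_empty_of_etaOmega_lt [T2Space E]
    (hmono : MonotoneOn η {K | IsCompact K}) (hA : IsCompact A) (h : etaOmega η A < ε) :
    fragIter η ε A Ordinal.omega0 = ∅ := by
  have hlarge : |η A| + 1 ∈ {ε | 0 < ε ∧ fragIter η ε A Ordinal.omega0 = ∅} :=
    ⟨by positivity, fragIter_omega0_eq_empty_of_lt (by linarith [le_abs_self (η A)])⟩
  obtain ⟨ε', ⟨-, hε'⟩, hlt⟩ := exists_lt_of_csInf_lt ⟨_, hlarge⟩ h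
  exact subset_eq_empty (fragIter_omega0_anti_eps hmono hA hlt.le) hε'

theorem etaOmega_mono [T2Space E] (hmono : MonotoneOn η {K | IsCompact K})
    (hA : IsCompact A) (hB : IsCompact B) (hAB : A ⊆ B) : etaOmega η A ≤ etaOmega η B :=
  etaOmega_le_of_forall_lt etaOmega_nonneg fun _ hε =>
    subset_eq_empty (fragIter_omega0_mono hmono hA hB hAB)
      (fragIter_omega0_eq_empty_of_etaOmega_lt hmono hB hε)

end EtaOmega

section MNC

variable [TopologicalSpace E] [AddCommGroup E] [Module ℝ E] {ball : Set E} {b : ℝ}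
  {η : Set E → ℝ} {ε : ℝ} {x : E} {A B K : Set E}

theorem IsMNCWith.monotoneOn (hη : IsMNCWith ball b η) : MonotoneOn η {K | IsCompact K} :=
  fun A hA B hB hAB => hη.mono A B hA hB hAB

theorem IsMNCWith.empty (hη : IsMNCWith ball b η) : η ∅ = 0 :=
  le_antisymm ((hη.mono ∅ {0} isCompact_empty isCompact_singleton (empty_subset _)).trans_eq
    (hη.singleton 0)) (hη.nonneg ∅ isCompact_empty)

variable [T3Space E]

theorem exists_isClosed_mem_nhds_lt_of_notMem_frag (hη : IsMNCWith ball b η) (hε : 0 < ε)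
    (hA : IsCompact A) (hx : x ∉ frag η ε A) : ∃ V ∈ 𝓝 x, IsClosed V ∧ η (A ∩ V) < ε := by
  by_cases hxA : x ∈ A
  · obtain ⟨U, hU, hlt⟩ : ∃ U ∈ 𝓝 x, η (A ∩ closure U) < ε := by
      simpa [frag, hxA] using hx
    exact ⟨closure U, mem_of_superset hU subset_closure, isClosed_closure, hlt⟩
  · obtain ⟨V, hV, hVc, hVA⟩ :=
      exists_mem_nhds_isClosed_subset (hA.isClosed.isOpen_compl.mem_nhds hxA)
    refine ⟨V, hV, hVc, ?_⟩
    rwa [show A ∩ V = ∅ from eq_empty_of_forall_notMem fun y hy => hVA hy.2 hy.1, hη.empty]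

theorem exists_isClosed_subset_interior_lt_of_disjoint_frag (hη : IsMNCWith ball b η)
    (hε : 0 < ε) (hA : IsCompact A) (hK : IsCompact K) (hKA : Disjoint K (frag η ε A)) :
    ∃ V, IsClosed V ∧ K ⊆ interior V ∧ η (A ∩ V) < ε := by
  refine hK.induction_on (p := fun S => ∃ V, IsClosed V ∧ S ⊆ interior V ∧ η (A ∩ V) < ε)
    ⟨∅, isClosed_empty, empty_subset _, by rwa [inter_empty, hη.empty]⟩
    (fun S T hST ⟨V, hVc, hTV, hVlt⟩ => ⟨V, hVc, hST.trans hTV, hVlt⟩) ?_ fun x hx => ?_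
  · rintro S T ⟨V, hVc, hSV, hVlt⟩ ⟨W, hWc, hTW, hWlt⟩
    refine ⟨V ∪ W, hVc.union hWc, (union_subset_union hSV hTW).trans subset_interior_union, ?_⟩
    rw [inter_union_distrib_left, hη.union _ _ (hA.inter_right hVc) (hA.inter_right hWc)]
    exact max_lt hVlt hWlt
  · obtain ⟨V, hV, hVc, hVlt⟩ := exists_isClosed_mem_nhds_lt_of_notMem_frag hη hε hA
      (hKA.notMem_of_mem_left hx)
    exact ⟨interior V, mem_nhdsWithin_of_mem_nhds (interior_mem_nhds.2 hV),
      V, hVc, subset_rfl, hVlt⟩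

theorem frag_union_subset (hη : IsMNCWith ball b η) (hε : 0 < ε) (hA : IsCompact A)
    (hB : IsCompact B) : frag η ε (A ∪ B) ⊆ frag η ε A ∪ frag η ε B := by
  intro x hx
  by_contra hx'
  rw [mem_union, not_or] at hx'
  obtain ⟨V, hV, hVc, hVlt⟩ := exists_isClosed_mem_nhds_lt_of_notMem_frag hη hε hA hx'.1
  obtain ⟨W, hW, hWc, hWlt⟩ := exists_isClosed_mem_nhds_lt_of_notMem_frag hη hε hB hx'.2
  have hAVW : η (A ∩ (V ∩ W)) < ε := (hη.mono _ _ (hA.inter_right (hVc.inter hWc))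
    (hA.inter_right hVc) (inter_subset_inter_right _ inter_subset_left)).trans_lt hVlt
  have hBVW : η (B ∩ (V ∩ W)) < ε := (hη.mono _ _ (hB.inter_right (hVc.inter hWc))
    (hB.inter_right hWc) (inter_subset_inter_right _ inter_subset_right)).trans_lt hWlt
  have hge := hx.2 (V ∩ W) (inter_mem hV hW)
  rw [(hVc.inter hWc).closure_eq, union_inter_distrib_right,
    hη.union _ _ (hA.inter_right (hVc.inter hWc)) (hB.inter_right (hVc.inter hWc))] at hge
  exact hge.not_gt (max_lt hAVW hBVW)

theorem iterate_frag_union_subset (hη : IsMNCWith ball b η) (hε : 0 < ε) (hA : IsCompact A)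
    (hB : IsCompact B) (n : ℕ) :
    (frag η ε)^[n] (A ∪ B) ⊆ (frag η ε)^[n] A ∪ (frag η ε)^[n] B := by
  induction n with
  | zero => exact subset_rfl
  | succ n ih =>
    have hAn := isCompact_iterate_frag hη.monotoneOn hA n (ε := ε)
    have hBn := isCompact_iterate_frag hη.monotoneOn hB n (ε := ε)
    simp only [Function.iterate_succ_apply']
    exact (frag_mono hη.monotoneOn (isCompact_iterate_frag hη.monotoneOn (hA.union hB) n)
      (hAn.union hBn) ih).trans (frag_union_subset hη hε hAn hBn)

theorem fragIter_omega0_union_subset (hη : IsMNCWith ball b η) (hε : 0 < ε)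
    (hA : IsCompact A) (hB : IsCompact B) : fragIter η ε (A ∪ B) Ordinal.omega0 ⊆
      fragIter η ε A Ordinal.omega0 ∪ fragIter η ε B Ordinal.omega0 := by
  simp only [fragIter_omega0]
  rw [← iInter_union_of_antitone antitone_iterate_frag antitone_iterate_frag]
  exact iInter_mono (iterate_frag_union_subset hη hε hA hB)

theorem etaOmega_union (hη : IsMNCWith ball b η) (hA : IsCompact A) (hB : IsCompact B) :
    etaOmega η (A ∪ B) = max (etaOmega η A) (etaOmega η B) := by
  refine le_antisymm (etaOmega_le_of_forall_lt (etaOmega_nonneg.trans (le_max_left _ _))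
    fun ε hε => ?_) (max_le (etaOmega_mono hη.monotoneOn hA (hA.union hB) subset_union_left)
      (etaOmega_mono hη.monotoneOn hB (hA.union hB) subset_union_right))
  rw [max_lt_iff] at hε
  refine subset_eq_empty (fragIter_omega0_union_subset hη ?_ hA hB) ?_
  · exact etaOmega_nonneg.trans_lt hε.1
  · rw [fragIter_omega0_eq_empty_of_etaOmega_lt hη.monotoneOn hA hε.1,
      fragIter_omega0_eq_empty_of_etaOmega_lt hη.monotoneOn hB hε.2, union_empty]

end MNC

section BallAdd

variable [TopologicalSpace E] [AddCommGroup E] [Module ℝ E] [IsTopologicalAddGroup E]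
  [ContinuousConstSMul ℝ E] [T3Space E] {ball : Set E} {b : ℝ} {η : Set E → ℝ} {ε l : ℝ}
  {A : Set E}

theorem frag_add_smul_subset (hη : IsMNCWith ball b η) (hball : IsCompact ball) (hε : 0 < ε)
    (hl : 0 < l) (hA : IsCompact A) :
    frag η (ε + l * b) (A + l • ball) ⊆ frag η ε A + l • ball := by
  intro x hx
  by_contra hx'
  have hB : IsCompact (l • ball) := hball.smul l
  have hK : Disjoint (A ∩ (x - ·) '' (l • ball)) (frag η ε A) :=
    disjoint_left.2 fun a ⟨_, v, hv, hva⟩ ha => hx' ⟨a, ha, v, hv, hva ▸ sub_add_cancel x v⟩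
  obtain ⟨V, hVc, hKV, hVlt⟩ := exists_isClosed_subset_interior_lt_of_disjoint_frag hη hε hA
    (hA.inter (hB.image (continuous_sub_left x))) hK
  obtain ⟨N, hN, hNc, hNV⟩ := exists_isClosed_mem_nhds_add_inter_subset hA hB hKV
  have hge := hx.2 N hN
  rw [hNc.closure_eq] at hge
  have hlt : η ((A + l • ball) ∩ N) < ε + l * b := calc
    η ((A + l • ball) ∩ N) ≤ η (A ∩ V + l • ball) :=
      hη.mono _ _ ((hA.add hB).inter_right hNc) ((hA.inter_right hVc).add hB) hNV
    _ ≤ η (A ∩ V) + l * b := hη.ball_add _ (hA.inter_right hVc) l hl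
    _ < ε + l * b := by linarith
  exact hge.not_gt hlt

theorem iterate_frag_add_smul_subset (hη : IsMNCWith ball b η) (hball : IsCompact ball)
    (hε : 0 < ε) (hl : 0 < l) (hA : IsCompact A) (n : ℕ) :
    (frag η (ε + l * b))^[n] (A + l • ball) ⊆ (frag η ε)^[n] A + l • ball := by
  induction n with
  | zero => exact subset_rfl
  | succ n ih =>
    have hAn := isCompact_iterate_frag hη.monotoneOn hA n (ε := ε)
    simp only [Function.iterate_succ_apply']
    exact (frag_mono hη.monotoneOn
      (isCompact_iterate_frag hη.monotoneOn (hA.add (hball.smul l)) n)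
      (hAn.add (hball.smul l)) ih).trans (frag_add_smul_subset hη hball hε hl hAn)

theorem fragIter_omega0_add_smul_subset (hη : IsMNCWith ball b η) (hball : IsCompact ball)
    (hε : 0 < ε) (hl : 0 < l) (hA : IsCompact A) :
    fragIter η (ε + l * b) (A + l • ball) Ordinal.omega0 ⊆
      fragIter η ε A Ordinal.omega0 + l • ball := by
  simp only [fragIter_omega0]
  exact (iInter_mono (iterate_frag_add_smul_subset hη hball hε hl hA)).trans
    (iInter_add_subset_of_antitone antitone_iterate_frag
      (isCompact_iterate_frag hη.monotoneOn hA) (hball.smul l))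

theorem etaOmega_add_smul_le (hη : IsMNCWith ball b η) (hball : IsCompact ball)
    (hA : IsCompact A) (hl : 0 < l) :
    etaOmega η (A + l • ball) ≤ etaOmega η A + l * b := by
  have hlb : 0 < l * b := mul_pos hl hη.b_pos
  refine etaOmega_le_of_forall_lt (by linarith [etaOmega_nonneg (η := η) (A := A)])
    fun ε hε => ?_
  have hε' : etaOmega η A < ε - l * b := by linarith
  refine subset_eq_empty (sub_add_cancel ε (l * b) ▸ fragIter_omega0_add_smul_subset hη hball
    (etaOmega_nonneg.trans_lt hε') hl hA) ?_
  rw [fragIter_omega0_eq_empty_of_etaOmega_lt hη.monotoneOn hA hε', empty_add]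

end BallAdd

theorem isCompact_dualBall : IsCompact (dualBall X) := by
  convert WeakDual.isCompact_closedBall (0 : StrongDual ℝ X) 1 using 1
  ext f
  simp [dualBall, dnorm]

theorem etaOmega_isMNC_general
    {X : Type*} [NormedAddCommGroup X] [NormedSpace ℝ X]
    (b : ℝ) (η : Set (WeakDual ℝ X) → ℝ)
    (hη : IsMNCWith (dualBall X) b η) :
    IsMNCWith (dualBall X) b (etaOmega η) := by
  refine ⟨hη.b_pos, fun _ _ => etaOmega_nonneg, fun x => ?_,
    fun _ _ hA hB hAB => etaOmega_mono hη.monotoneOn hA hB hAB,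
    fun _ _ hA hB => etaOmega_union hη hA hB,
    fun _ hA _ hl => etaOmega_add_smul_le hη isCompact_dualBall hA hl⟩
  exact le_antisymm
    ((etaOmega_le_self (hη.nonneg _ isCompact_singleton)).trans_eq (hη.singleton x))
    etaOmega_nonneg

/-- If `η` is a measure of non compactness on `X*`, with constant `b > 0` in
property (iii), then the `ω`-iterated measure `η^ω` is also a measure of non
compactness on `X*`, with the same constant `b`. -/
theorem etaOmega_isMNC
    {X : Type*} [NormedAddCommGroup X] [NormedSpace ℝ X] [CompleteSpace X]
    (b : ℝ) (η : Set (WeakDual ℝ X) → ℝ)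
    (hη : IsMNCWith (dualBall X) b η) :
    IsMNCWith (dualBall X) b (etaOmega η) :=
  etaOmega_isMNC_general b η hη

end Szlenk
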